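/- arXiv:1603.03661 — 2 statements merged into one kernel-verified Lean document; each statement's English description precedes it below -/
import Mathlib

section
/- Let X be a non-commutative Corson countably compact space. Then the Aleksandrov duplicate AD(X) is a non-commutative Corson countably compact space. -/
open Filter Topology Set

universe u

section Defs

/-- A space is countably compact if every countable open cover has a finite subcover. -/
def CountablyCompact (X : Type u) [TopologicalSpace X] : Prop :=
  ∀ U : ℕ → Set X, (∀ n, IsOpen (U n)) → (⋃ n, U n) = Set.univ →
    ∃ t : Finset ℕ, (⋃ n ∈ t, U n) = Set.univ

variable {X : Type u} [TopologicalSpace X]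

/-- A retractional skeleton on a topological space `X`. -/
structure IsRetractionalSkeleton {Γ : Type u} [PartialOrder Γ] (r : Γ → X → X) : Prop where
  nonempty : Nonempty Γ
  directed : ∀ s t : Γ, ∃ w, s ≤ w ∧ t ≤ w
  continuous : ∀ s, Continuous (r s)
  retraction : ∀ s, r s ∘ r s = r s
  compact_range : ∀ s, IsCompact (Set.range (r s))
  metrizable_range : ∀ s, TopologicalSpace.MetrizableSpace (Set.range (r s))
  comp_eq_of_le : ∀ s t, s ≤ t → r t ∘ r s = r s ∧ r s ∘ r t = r s
  seq_sup : ∀ u : ℕ → Γ, Monotone u →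
    ∃ t, IsLUB (Set.range u) t ∧
      ∀ x, Filter.Tendsto (fun n => r (u n) x) Filter.atTop (nhds (r t x))
  tendsto_id : ∀ x, Filter.Tendsto (fun s => r s x) Filter.atTop (nhds x)

/-- `X` admits a retractional skeleton (non-commutative Valdivia when `X` is compact). -/
def HasRetractionalSkeleton (X : Type u) [TopologicalSpace X] : Prop :=
  ∃ (Γ : Type u) (_ : PartialOrder Γ) (r : Γ → X → X), IsRetractionalSkeleton r

/-- `X` admits a full retractional skeleton. -/
def HasFullRetractionalSkeleton (X : Type u) [TopologicalSpace X] : Prop :=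
  ∃ (Γ : Type u) (_ : PartialOrder Γ) (r : Γ → X → X),
    IsRetractionalSkeleton r ∧ ∀ x : X, ∃ s, x ∈ Set.range (r s)

/-- A non-commutative Corson countably compact space. -/
def IsNCCorson (X : Type u) [TopologicalSpace X] : Prop :=
  CountablyCompact X ∧ HasFullRetractionalSkeleton X

/-- A weakly non-commutative Corson countably compact space: a countably compact
continuous image of a non-commutative Corson countably compact space. -/
def IsWeaklyNCCorson (Y : Type u) [TopologicalSpace Y] : Prop :=
  CountablyCompact Y ∧
  ∃ (X : Type u) (_ : TopologicalSpace X) (_ : T2Space X) (_ : CompletelyRegularSpace X),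
    IsNCCorson X ∧ ∃ f : X → Y, Continuous f ∧ Function.Surjective f

/-- A weakly non-commutative Valdivia compact space: a compact space with a dense
countably compact subspace which is weakly non-commutative Corson. -/
def IsWeaklyNCValdivia (K : Type u) [TopologicalSpace K] : Prop :=
  CompactSpace K ∧ ∃ D : Set K, Dense D ∧ IsWeaklyNCCorson ↥D

end Defs

/-- The topology of the Aleksandrov duplicate of `X` on `X x Bool`: every point
`(x, true)` is isolated and a neighborhood basis at `(x, false)` is given by the sets
`(U x {false, true}) \ {(x, true)}` for `U` a neighborhood of `x`. -/
def ADTopology (X : Type u) [TopologicalSpace X] : TopologicalSpace (X × Bool) where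
  IsOpen V := ∀ x : X, (x, false) ∈ V →
    ∃ U : Set X, IsOpen U ∧ x ∈ U ∧ (U ×ˢ (Set.univ : Set Bool)) \ {(x, true)} ⊆ V
  isOpen_univ := fun x _ => ⟨Set.univ, isOpen_univ, trivial, fun _ _ => trivial⟩
  isOpen_inter := by
    intro V W hV hW x hx
    obtain ⟨U1, hU1, hxU1, hsub1⟩ := hV x hx.1
    obtain ⟨U2, hU2, hxU2, hsub2⟩ := hW x hx.2
    refine ⟨U1 ∩ U2, hU1.inter hU2, ⟨hxU1, hxU2⟩, fun p hp => ?_⟩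
    exact ⟨hsub1 ⟨⟨hp.1.1.1, hp.1.2⟩, hp.2⟩, hsub2 ⟨⟨hp.1.1.2, hp.1.2⟩, hp.2⟩⟩
  isOpen_sUnion := by
    intro S hS x hx
    obtain ⟨V, hVS, hxV⟩ := hx
    obtain ⟨U, hU, hxU, hsub⟩ := hS V hVS x hxV
    exact ⟨U, hU, hxU, hsub.trans (Set.subset_sUnion_of_mem hVS)⟩

/-!
Given a full skeleton `(r s)` on `X`, index a skeleton on `AD(X)` by the pairs `(s, A)` with
`A ⊆ r s [X]` countable: the retraction fixes the isolated points over `A` and sends every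
other point `(x, b)` to `(r s x, false)`. Its range is `r s [X] × {false} ∪ A × {true}`. This
is compact, since a filter clustering at `x` in `X` clusters at `(x, false)` or at `(x, true)`
in `AD(X)` (the same dichotomy gives countable compactness of `AD(X)`), and metrizable, since
`(x, b) ↦ (x, (b = true ∧ x = a)_{a ∈ A})` embeds it into `r s [X] × Bool ^ A`. Because the
original skeleton is full, every isolated point is eventually fixed, which yields both
`p = lim r_(s,A) p` and fullness.
-/

lemma countablyCompact_iff_countablyCompactSpace {X : Type u} [TopologicalSpace X] :
    CountablyCompact X ↔ CountablyCompactSpace X := by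
  simp only [CountablyCompact, ← isCountablyCompact_univ_iff,
    isCountablyCompact_iff_countable_open_cover, univ_subset_iff]

lemma apply_eq_self_of_mem_range {α : Type*} {f : α → α} (hf : f ∘ f = f) {x : α}
    (hx : x ∈ range f) : f x = x := by
  obtain ⟨y, rfl⟩ := hx
  exact congrFun hf y

/-- `X × Bool` carrying `ADTopology X`; this instance, declared later, shadows the product
topology on the synonym. -/
abbrev ADS (X : Type u) [TopologicalSpace X] : Type u := X × Bool

instance {X : Type u} [TopologicalSpace X] : TopologicalSpace (ADS X) := ADTopology X

namespace ADS

variable {X : Type u} [TopologicalSpace X]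

lemma isOpen_iff {V : Set (ADS X)} :
    IsOpen V ↔ ∀ x : X, ((x, false) : ADS X) ∈ V →
      ∃ U : Set X, IsOpen U ∧ x ∈ U ∧ (U ×ˢ univ) \ {((x, true) : ADS X)} ⊆ V :=
  Iff.rfl

lemma continuous_fst : Continuous (fun p : ADS X => p.1) :=
  continuous_def.2 fun U hU => isOpen_iff.2 fun _ hx => ⟨U, hU, hx, fun _ hp => hp.1.1⟩

lemma isOpen_singleton_true (x : X) : IsOpen {((x, true) : ADS X)} :=
  isOpen_iff.2 fun y hy => by simp at hy

lemma nhds_true (x : X) : 𝓝 ((x, true) : ADS X) = pure (x, true) :=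
  (isOpen_singleton_iff_nhds_eq_pure _).1 (isOpen_singleton_true x)

lemma isClosed_singleton_true [T1Space X] (x : X) : IsClosed {((x, true) : ADS X)} := by
  refine isOpen_compl_iff.1 (isOpen_iff.2 fun y _ => ?_)
  refine ⟨({x} \ {y})ᶜ, (finite_singleton x).sdiff.isClosed.isOpen_compl, by simp, ?_⟩
  rintro ⟨z, b⟩ ⟨⟨hz, -⟩, hne⟩ hzx
  simp_all

lemma tendsto_nhds_false {ι : Type*} {l : Filter ι} {f : ι → ADS X} {x : X}
    (hfst : Tendsto (fun i => (f i).1) l (𝓝 x)) (hne : ∀ᶠ i in l, f i ≠ (x, true)) :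
    Tendsto f l (𝓝 (x, false)) := by
  refine tendsto_nhds.2 fun V hV hxV => ?_
  obtain ⟨U, hU, hxU, hUV⟩ := isOpen_iff.1 hV x hxV
  filter_upwards [tendsto_nhds.1 hfst U hU hxU, hne] with i hiU hi
  exact hUV ⟨⟨hiU, trivial⟩, hi⟩

/-- Every isolated point over a neighbourhood of `x` except `(x, true)` is near `(x, false)`. -/
lemma clusterPt_false_or_clusterPt_true {f : Filter (ADS X)} {x : X}
    (hx : ClusterPt x (map Prod.fst f)) : ClusterPt (x, false) f ∨ ClusterPt (x, true) f := by
  by_contra! h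
  obtain ⟨hfalse, htrue⟩ := h
  simp only [clusterPt_iff_nonempty, not_forall, not_nonempty_iff_eq_empty, exists_prop] at hfalse
  obtain ⟨V, hV, W, hW, hVW⟩ := hfalse
  obtain ⟨V', hV'V, hV', hxV'⟩ := mem_nhds_iff.1 hV
  obtain ⟨U, hU, hxU, hUV'⟩ := isOpen_iff.1 hV' x hxV'
  have hW' : W ∩ {(x, true)}ᶜ ∈ f := by
    obtain ⟨s, hs, hxs⟩ : ∃ s ∈ f, ((x, true) : ADS X) ∉ closure s := by
      simpa [clusterPt_iff_forall_mem_closure] using htrue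
    exact inter_mem hW (mem_of_superset hs fun q hq hqx => hxs (hqx ▸ subset_closure hq))
  obtain ⟨y, hyU, p, ⟨hpW, hpx⟩, rfl⟩ :=
    clusterPt_iff_nonempty.1 hx (hU.mem_nhds hxU) (image_mem_map hW')
  exact (eq_empty_iff_forall_notMem.1 hVW) p ⟨hV'V (hUV' ⟨⟨hyU, trivial⟩, hpx⟩), hpW⟩

def duplicateOver (K A : Set X) : Set (ADS X) := {p | p.1 ∈ K ∧ (p.2 = true → p.1 ∈ A)}

lemma exists_clusterPt_of_le_principal_duplicateOver {K A : Set X} {f : Filter (ADS X)}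
    (hf : f ≤ 𝓟 (duplicateOver K A)) {x : X} (hxK : x ∈ K)
    (hx : ClusterPt x (map Prod.fst f)) : ∃ p ∈ duplicateOver K A, ClusterPt p f := by
  rcases clusterPt_false_or_clusterPt_true hx with h | h
  · exact ⟨_, ⟨hxK, by simp⟩, h⟩
  · refine ⟨_, ?_, h⟩
    obtain ⟨q, hq, hqL⟩ :=
      mem_closure_iff.1 (h.mono hf).mem_closure _ (isOpen_singleton_true x) rfl
    rwa [mem_singleton_iff.1 hq] at hqL

lemma map_fst_le_of_le_duplicateOver {K A : Set X} {f : Filter (ADS X)}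
    (hf : f ≤ 𝓟 (duplicateOver K A)) : map Prod.fst f ≤ 𝓟 K := by
  refine (map_mono hf).trans ?_
  rw [map_principal]
  exact principal_mono.2 (image_subset_iff.2 fun _ hp => hp.1)

lemma isCompact_duplicateOver {K : Set X} (hK : IsCompact K) (A : Set X) :
    IsCompact (duplicateOver K A) := fun _ _ hf =>
  let ⟨_, hxK, hx⟩ := hK (map_fst_le_of_le_duplicateOver hf)
  exists_clusterPt_of_le_principal_duplicateOver hf hxK hx

lemma isCountablyCompact_duplicateOver {K : Set X} (hK : IsCountablyCompact K) (A : Set X) :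
    IsCountablyCompact (duplicateOver K A) := fun _ _ _ hf =>
  let ⟨_, hxK, hx⟩ := hK (map_fst_le_of_le_duplicateOver hf)
  exists_clusterPt_of_le_principal_duplicateOver hf hxK hx

instance [CountablyCompactSpace X] : CountablyCompactSpace (ADS X) := by
  refine isCountablyCompact_univ_iff.1 ?_
  convert isCountablyCompact_duplicateOver
    (CountablyCompactSpace.isCountablyCompact_univ (E := X)) univ
  ext; simp [duplicateOver]

open Classical in
noncomputable def dupMap (r : X → X) (A : Set X) (p : ADS X) : ADS X :=
  if p.2 = true ∧ p.1 ∈ A then p else (r p.1, false)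

section dupMap

variable {r r' : X → X} {A B : Set X}

@[simp] lemma dupMap_false (x : X) : dupMap r A (x, false) = (r x, false) := by
  simp [dupMap]

lemma dupMap_true_of_mem {x : X} (hx : x ∈ A) : dupMap r A (x, true) = (x, true) := by
  simp [dupMap, hx]

lemma dupMap_true_of_notMem {x : X} (hx : x ∉ A) : dupMap r A (x, true) = (r x, false) := by
  simp [dupMap, hx]

lemma dupMap_id_univ : dupMap id (univ : Set X) = id := by
  ext ⟨x, _ | _⟩ <;> simp [dupMap]

lemma fst_dupMap (hA : ∀ a ∈ A, r a = a) (p : ADS X) : (dupMap r A p).1 = r p.1 := by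
  unfold dupMap; split_ifs with h
  · exact (hA _ h.2).symm
  · rfl

lemma dupMap_eq_true_iff {p : ADS X} {y : X} :
    dupMap r A p = (y, true) ↔ p = (y, true) ∧ y ∈ A := by
  unfold dupMap; split_ifs with h <;> aesop

lemma dupMap_comp_dupMap_eq_right (h : r' ∘ r = r) (hAB : A ⊆ B) :
    dupMap r' B ∘ dupMap r A = dupMap r A := by
  have h' : ∀ x, r' (r x) = r x := congrFun h
  ext ⟨x, _ | _⟩ : 1
  · simp [h']
  · by_cases hx : x ∈ A
    · simp [dupMap, hx, hAB hx]
    · simp [dupMap, hx, h']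

lemma dupMap_comp_dupMap_eq_left (h : r ∘ r' = r) (hAB : A ⊆ B) :
    dupMap r A ∘ dupMap r' B = dupMap r A := by
  have h' : ∀ x, r (r' x) = r x := congrFun h
  ext ⟨x, _ | _⟩ : 1
  · simp [h']
  · by_cases hx : x ∈ B
    · simp [dupMap_true_of_mem hx]
    · have hxA : x ∉ A := fun h => hx (hAB h)
      simp [dupMap, hx, hxA, h']

lemma continuous_dupMap [T1Space X] (hr : Continuous r) (hA : ∀ a ∈ A, r a = a) :
    Continuous (dupMap r A) := by
  refine continuous_iff_continuousAt.2 fun ⟨x, b⟩ => ?_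
  cases b
  · refine tendsto_nhds_false ?_ ?_
    · simp only [fst_dupMap hA]
      exact (hr.comp continuous_fst).tendsto _
    · have hne : ((x, false) : ADS X) ≠ (r x, true) := by simp
      filter_upwards [(isClosed_singleton_true (r x)).isOpen_compl.mem_nhds hne] with p hp h
      exact hp (dupMap_eq_true_iff.1 h).1
  · rw [ContinuousAt, nhds_true]
    exact tendsto_pure_nhds _ _

lemma range_dupMap (hr : r ∘ r = r) (hA : A ⊆ range r) :
    range (dupMap r A) = duplicateOver (range r) A := by
  refine Subset.antisymm (range_subset_iff.2 fun p => ?_) fun ⟨x, b⟩ ⟨hxr, hxA⟩ => ?_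
  · unfold dupMap
    split_ifs with h
    · exact ⟨hA h.2, fun _ => h.2⟩
    · exact ⟨mem_range_self _, by simp⟩
  · cases b
    · exact ⟨(x, false), by simp [apply_eq_self_of_mem_range hr hxr]⟩
    · exact ⟨(x, true), dupMap_true_of_mem (hxA rfl)⟩

lemma metrizableSpace_duplicateOver [T1Space X] {K : Set X} (hK : IsCompact K)
    [TopologicalSpace.MetrizableSpace K] (hA : A.Countable) :
    TopologicalSpace.MetrizableSpace (duplicateOver K A) := by
  classical
  have : Countable A := hA.to_subtype
  have : CompactSpace (duplicateOver K A) :=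
    isCompact_iff_compactSpace.1 (isCompact_duplicateOver hK A)
  let φ : duplicateOver K A → K × (A → Bool) :=
    fun p => (⟨p.1.1, p.2.1⟩, fun a => decide (p.1 = ((a : X), true)))
  have hφ : Continuous φ := by
    refine ((continuous_fst.comp continuous_subtype_val).subtype_mk _).prodMk
      (continuous_pi fun a => ?_)
    refine ((continuous_bool_rng (f := fun q : ADS X => decide (q = ((a : X), true))) true).2
      ?_).comp continuous_subtype_val
    have : (fun q : ADS X => decide (q = ((a : X), true))) ⁻¹' {true} = {((a : X), true)} := by
      ext; simp
    exact this ▸ ⟨isClosed_singleton_true a.1, isOpen_singleton_true a.1⟩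
  have hφinj : Function.Injective φ := by
    rintro ⟨⟨x, b⟩, hxK, hxA⟩ ⟨⟨y, c⟩, hyK, hyA⟩ h
    simp only [φ, Prod.mk.injEq, Subtype.mk.injEq] at h
    obtain ⟨rfl, h⟩ := h
    cases b <;> cases c
    · rfl
    · simpa using congrFun h ⟨x, hyA rfl⟩
    · simpa using congrFun h ⟨x, hxA rfl⟩
    · rfl
  exact (hφ.isClosedEmbedding hφinj).isEmbedding.metrizableSpace

end dupMap

lemma tendsto_dupMap {ι : Type*} {l : Filter ι} {r : ι → X → X} {A : ι → Set X}
    {s : X → X} {B : Set X} (hr : ∀ x, Tendsto (fun i => r i x) l (𝓝 (s x)))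
    (hA : ∀ x, ∀ᶠ i in l, x ∈ A i ↔ x ∈ B) (p : ADS X) :
    Tendsto (fun i => dupMap (r i) (A i) p) l (𝓝 (dupMap s B p)) := by
  have hfalse (x : X) : Tendsto (fun i => ((r i x, false) : ADS X)) l (𝓝 (s x, false)) :=
    tendsto_nhds_false (hr x) (Eventually.of_forall fun _ => by simp)
  obtain ⟨x, _ | _⟩ := p
  · simpa using hfalse x
  · by_cases hx : x ∈ B
    · rw [dupMap_true_of_mem hx]
      exact tendsto_const_nhds.congr'
        ((hA x).mono fun i hi => (dupMap_true_of_mem (hi.2 hx)).symm)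
    · rw [dupMap_true_of_notMem hx]
      exact (hfalse x).congr'
        ((hA x).mono fun i hi => (dupMap_true_of_notMem (mt hi.1 hx)).symm)

variable {Γ : Type u} [PartialOrder Γ]

abbrev SkeletonIndex (r : Γ → X → X) : Type u :=
  {p : Γ × Set X // p.2.Countable ∧ p.2 ⊆ range (r p.1)}

noncomputable def skeleton (r : Γ → X → X) (p : SkeletonIndex r) : ADS X → ADS X :=
  dupMap (r p.1.1) p.1.2

end ADS

namespace IsRetractionalSkeleton

open ADS

variable {X : Type u} [TopologicalSpace X] {Γ : Type u} [PartialOrder Γ] {r : Γ → X → X}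

lemma range_mono (h : IsRetractionalSkeleton r) {s t : Γ} (hst : s ≤ t) :
    range (r s) ⊆ range (r t) :=
  (h.comp_eq_of_le s t hst).1 ▸ range_comp_subset_range (r s) (r t)

lemma apply_eq_self (h : IsRetractionalSkeleton r) {s : Γ} {x : X} (hx : x ∈ range (r s)) :
    r s x = x :=
  apply_eq_self_of_mem_range (h.retraction s) hx

lemma directed_skeletonIndex (h : IsRetractionalSkeleton r) (p q : SkeletonIndex r) :
    ∃ w, p ≤ w ∧ q ≤ w := by
  obtain ⟨w, hpw, hqw⟩ := h.directed p.1.1 q.1.1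
  exact ⟨⟨(w, p.1.2 ∪ q.1.2), p.2.1.union q.2.1,
    union_subset (p.2.2.trans (h.range_mono hpw)) (q.2.2.trans (h.range_mono hqw))⟩,
    ⟨hpw, subset_union_left⟩, ⟨hqw, subset_union_right⟩⟩

lemma seq_sup_skeleton (h : IsRetractionalSkeleton r) (u : ℕ → SkeletonIndex r)
    (hu : Monotone u) :
    ∃ t, IsLUB (range u) t ∧
      ∀ z, Tendsto (fun n => skeleton r (u n) z) atTop (𝓝 (skeleton r t z)) := by
  obtain ⟨t, ht, hconv⟩ := h.seq_sup (fun n => (u n).1.1) fun m n hmn => (hu hmn).1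
  have hle (n : ℕ) : (u n).1.1 ≤ t := ht.1 (mem_range_self n)
  refine ⟨⟨(t, ⋃ n, (u n).1.2), countable_iUnion fun n => (u n).2.1,
    iUnion_subset fun n => (u n).2.2.trans (h.range_mono (hle n))⟩,
    ⟨?_, fun q hq => ?_⟩, tendsto_dupMap hconv fun x => ?_⟩
  · rintro _ ⟨n, rfl⟩
    exact ⟨hle n, subset_iUnion (fun k => (u k).1.2) n⟩
  · exact ⟨ht.2 (forall_mem_range.2 fun n => (hq (mem_range_self n)).1),
      iUnion_subset fun n => (hq (mem_range_self n)).2⟩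
  · by_cases hx : x ∈ ⋃ n, (u n).1.2
    · obtain ⟨N, hN⟩ := mem_iUnion.1 hx
      filter_upwards [eventually_ge_atTop N] with n hn using iff_of_true ((hu hn).2 hN) hx
    · exact .of_forall fun n => iff_of_false (fun hn => hx (mem_iUnion_of_mem n hn)) hx

lemma tendsto_skeleton (h : IsRetractionalSkeleton r) (hfull : ∀ x, ∃ s, x ∈ range (r s))
    (z : ADS X) : Tendsto (fun p => skeleton r p z) atTop (𝓝 z) := by
  have hfst : Tendsto (fun p : SkeletonIndex r => p.1.1) atTop atTop :=
    Monotone.tendsto_atTop_atTop (fun _ _ hpq => hpq.1) fun s =>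
      ⟨⟨(s, ∅), countable_empty, empty_subset _⟩, le_rfl⟩
  have hA (x : X) : ∀ᶠ p : SkeletonIndex r in atTop, x ∈ p.1.2 ↔ x ∈ univ := by
    obtain ⟨s, hs⟩ := hfull x
    let p₀ : SkeletonIndex r := ⟨(s, {x}), countable_singleton x, singleton_subset_iff.2 hs⟩
    filter_upwards [eventually_ge_atTop p₀] with p hp using iff_of_true (hp.2 rfl) trivial
  simpa [skeleton, dupMap_id_univ] using
    tendsto_dupMap (s := id) (fun x => (h.tendsto_id x).comp hfst) hA z

lemma exists_mem_range_skeleton (h : IsRetractionalSkeleton r)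
    (hfull : ∀ x, ∃ s, x ∈ range (r s)) (z : ADS X) : ∃ p, z ∈ range (skeleton r p) := by
  obtain ⟨x, b⟩ := z
  obtain ⟨s, hs⟩ := hfull x
  refine ⟨⟨(s, {x}), countable_singleton x, singleton_subset_iff.2 hs⟩, ?_⟩
  rw [skeleton, range_dupMap (h.retraction s) (singleton_subset_iff.2 hs)]
  exact ⟨hs, fun _ => rfl⟩

theorem aleksandrovDuplicate [T1Space X] (h : IsRetractionalSkeleton r)
    (hfull : ∀ x, ∃ s, x ∈ range (r s)) :
    IsRetractionalSkeleton (skeleton r) where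
  nonempty := let ⟨s⟩ := h.nonempty; ⟨⟨(s, ∅), countable_empty, empty_subset _⟩⟩
  directed := h.directed_skeletonIndex
  continuous p := continuous_dupMap (h.continuous _) fun _ ha => h.apply_eq_self (p.2.2 ha)
  retraction p := dupMap_comp_dupMap_eq_right (h.retraction _) subset_rfl
  compact_range p := by
    rw [skeleton, range_dupMap (h.retraction _) p.2.2]
    exact isCompact_duplicateOver (h.compact_range _) _
  metrizable_range p := by
    rw [skeleton, range_dupMap (h.retraction _) p.2.2]
    have := h.metrizable_range p.1.1
    exact metrizableSpace_duplicateOver (h.compact_range _) p.2.1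
  comp_eq_of_le p q hpq :=
    ⟨dupMap_comp_dupMap_eq_right (h.comp_eq_of_le _ _ hpq.1).1 hpq.2,
      dupMap_comp_dupMap_eq_left (h.comp_eq_of_le _ _ hpq.1).2 hpq.2⟩
  seq_sup := h.seq_sup_skeleton
  tendsto_id := h.tendsto_skeleton hfull

end IsRetractionalSkeleton

theorem aleksandrovDuplicate_of_ncCorson_general
    {X : Type u} [TopologicalSpace X] [T2Space X]
    (hX : IsNCCorson X) :
    @IsNCCorson (X × Bool) (ADTopology X) := by
  obtain ⟨hcc, Γ, _, r, hr, hfull⟩ := hX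
  have := countablyCompact_iff_countablyCompactSpace.1 hcc
  have hAD : CountablyCompactSpace (ADS X) := inferInstance
  exact ⟨countablyCompact_iff_countablyCompactSpace.2 hAD,
    _, _, ADS.skeleton r, hr.aleksandrovDuplicate hfull, hr.exists_mem_range_skeleton hfull⟩

/-- The Aleksandrov duplicate of a non-commutative Corson countably
compact space is a non-commutative Corson countably compact space. -/
theorem aleksandrovDuplicate_of_ncCorson
    {X : Type u} [TopologicalSpace X] [T2Space X] [CompletelyRegularSpace X]
    (hX : IsNCCorson X) :
    @IsNCCorson (X × Bool) (ADTopology X) :=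
  aleksandrovDuplicate_of_ncCorson_general hX
end

section
/- Let {K_α}_{α∈A} be an arbitrary family of weakly non-commutative Valdivia compact spaces. Then the product ∏_{α∈A} K_α, with the product topology, is a weakly non-commutative Valdivia compact space. -/
open Filter Topology Set

universe u

/-!
Each factor `K α` contains a dense continuous image `f α '' X α` of a non-commutative Corson
space. Fix base points `p α ∈ X α` (if some `X α` is empty, so is `∏ α, K α`). The Σ-product of
the `X α` at `p` (points differing from `p` in countably many coordinates) carries a full
retractional skeleton: an index is a countable set `C` of coordinates together with skeleton
indices `s α`, and its retraction applies `r α (s α)` on `C` and is constantly `p α` off `C`;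
countability of `C` makes the ranges metrizable. The Σ-product is dense in `∏ α, X α`, so its
image under `Pi.map f` is dense in `∏ α, K α`, and a continuous image of a non-commutative Corson
space is weakly non-commutative Corson.
-/

lemma metrizableSpace_of_injective_pi {Z : Type*} [TopologicalSpace Z] [CompactSpace Z]
    [T2Space Z] {ι : Type*} [Countable ι] {Y : ι → Type*} [∀ i, TopologicalSpace (Y i)]
    [∀ i, CompactSpace (Y i)] [∀ i, TopologicalSpace.MetrizableSpace (Y i)] {f : Z → ∀ i, Y i}
    (hf : Continuous f) (hinj : Function.Injective f) : TopologicalSpace.MetrizableSpace Z :=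
  have := (hf.isClosedEmbedding hinj).isEmbedding.secondCountableTopology
  inferInstance

section CountablyCompact

variable {Z : Type u} [TopologicalSpace Z]

lemma countablyCompact_of_countable_subset_isCompact
    (h : ∀ S : Set Z, S.Countable → ∃ L, IsCompact L ∧ S ⊆ L) : CountablyCompact Z := by
  intro U hUo hU
  by_contra! hfin
  choose x hx using fun n => (Set.ne_univ_iff_exists_notMem _).1 (hfin (Finset.range (n + 1)))
  obtain ⟨L, hL, hxL⟩ := h _ (Set.countable_range x)
  set V : ℕ → Set Z := fun n => ⋃ k ∈ Finset.range (n + 1), U k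
  have hV_mono : Monotone V := fun m n hmn => Set.biUnion_subset_biUnion_left
    (Finset.coe_subset.2 (Finset.range_subset_range.2 (Nat.succ_le_succ hmn)))
  have hLV : L ⊆ ⋃ n, V n := fun y _ => by
    obtain ⟨k, hk⟩ := Set.mem_iUnion.1 (hU ▸ Set.mem_univ y)
    exact Set.mem_iUnion.2 ⟨k, Set.mem_biUnion (Finset.mem_range.2 k.lt_succ_self) hk⟩
  obtain ⟨n, hn⟩ := hL.elim_directed_cover V (fun n => isOpen_biUnion fun k _ => hUo k) hLV
    hV_mono.directed_le
  exact hx n (hn (hxL (Set.mem_range_self n)))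

lemma CountablyCompact.of_surjective {Y : Type u} [TopologicalSpace Y] {f : Z → Y}
    (hZ : CountablyCompact Z) (hf : Continuous f) (hsurj : Function.Surjective f) :
    CountablyCompact Y := by
  intro U hUo hU
  obtain ⟨t, ht⟩ := hZ (fun n => f ⁻¹' U n) (fun n => (hUo n).preimage hf)
    (by rw [← Set.preimage_iUnion, hU, Set.preimage_univ])
  refine ⟨t, hsurj.preimage_injective ?_⟩
  simpa only [Set.preimage_iUnion, Set.preimage_univ] using ht

end CountablyCompact

lemma exists_monotone_forall_le {Γ : Type*} [Preorder Γ] [IsDirectedOrder Γ] (s : ℕ → Γ) :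
    ∃ u : ℕ → Γ, Monotone u ∧ ∀ n, s n ≤ u n := by
  choose w hw₁ hw₂ using fun a b : Γ => exists_ge_ge a b
  let u : ℕ → Γ := fun n => Nat.rec (s 0) (fun n un => w un (s (n + 1))) n
  refine ⟨u, monotone_nat_of_le_succ fun n => hw₁ _ _, fun n => ?_⟩
  cases n with
  | zero => exact le_rfl
  | succ n => exact hw₂ _ _

namespace IsRetractionalSkeleton

variable {Z : Type u} [TopologicalSpace Z] {Γ : Type u} [PartialOrder Γ] {r : Γ → Z → Z}

lemma apply_apply_of_le (hr : IsRetractionalSkeleton r) {s t : Γ} (hst : s ≤ t) (x : Z) :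
    r t (r s x) = r s x :=
  congrFun (hr.comp_eq_of_le s t hst).1 x

lemma apply_eq_self_of_mem_range (hr : IsRetractionalSkeleton r) {s t : Γ} (hst : s ≤ t)
    {y : Z} (hy : y ∈ Set.range (r s)) : r t y = y := by
  obtain ⟨x, rfl⟩ := hy
  exact hr.apply_apply_of_le hst x

lemma apply_eq_self_of_le (hr : IsRetractionalSkeleton r) {s t : Γ} (hst : s ≤ t) {y : Z}
    (hy : r s y = y) : r t y = y :=
  hr.apply_eq_self_of_mem_range hst ⟨y, hy⟩

lemma exists_forall_apply_eq [T2Space Z] (hr : IsRetractionalSkeleton r) (x : ℕ → Z)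
    (hx : ∀ n, ∃ s, x n ∈ Set.range (r s)) : ∃ t, ∀ n, r t (x n) = x n := by
  choose s hs using hx
  have : IsDirectedOrder Γ := ⟨hr.directed⟩
  obtain ⟨u, hu_mono, hsu⟩ := exists_monotone_forall_le s
  obtain ⟨t, -, ht⟩ := hr.seq_sup u hu_mono
  refine ⟨t, fun n => tendsto_nhds_unique (ht (x n)) (tendsto_const_nhds.congr' ?_)⟩
  filter_upwards [Filter.eventually_ge_atTop n] with m hm
  exact (hr.apply_eq_self_of_mem_range ((hsu n).trans (hu_mono hm)) (hs n)).symm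

end IsRetractionalSkeleton

section NCCorson

variable {Z : Type u} [TopologicalSpace Z]

lemma HasFullRetractionalSkeleton.countablyCompact [T2Space Z]
    (h : HasFullRetractionalSkeleton Z) : CountablyCompact Z := by
  obtain ⟨Γ, _, r, hr, hfull⟩ := h
  refine countablyCompact_of_countable_subset_isCompact fun S hS => ?_
  rcases S.eq_empty_or_nonempty with rfl | hne
  · exact ⟨∅, isCompact_empty, le_rfl⟩
  obtain ⟨x, rfl⟩ := hS.exists_eq_range hne
  obtain ⟨t, ht⟩ := hr.exists_forall_apply_eq x fun n => hfull (x n)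
  exact ⟨Set.range (r t), hr.compact_range t, Set.range_subset_iff.2 fun n => ⟨x n, ht n⟩⟩

lemma HasFullRetractionalSkeleton.isNCCorson [T2Space Z] (h : HasFullRetractionalSkeleton Z) :
    IsNCCorson Z :=
  ⟨h.countablyCompact, h⟩

lemma hasFullRetractionalSkeleton_of_compact_metrizable [CompactSpace Z]
    [TopologicalSpace.MetrizableSpace Z] : HasFullRetractionalSkeleton Z := by
  have hlub (u : ℕ → PUnit.{u + 1}) : IsLUB (Set.range u) PUnit.unit := by
    simp [IsLUB, IsLeast, upperBounds, lowerBounds]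
  refine ⟨PUnit, inferInstance, fun _ => id, ⟨⟨PUnit.unit⟩, fun _ _ => ⟨PUnit.unit, le_rfl, le_rfl⟩,
    fun _ => continuous_id, fun _ => rfl, fun _ => isCompact_range continuous_id,
    fun _ => inferInstance, fun _ _ _ => ⟨rfl, rfl⟩,
    fun u _ => ⟨PUnit.unit, hlub u, fun _ => tendsto_const_nhds⟩, fun _ => tendsto_const_nhds⟩,
    fun x => ⟨PUnit.unit, x, rfl⟩⟩

lemma IsNCCorson.isWeaklyNCCorson_range [T2Space Z] [CompletelyRegularSpace Z] {Y : Type u}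
    [TopologicalSpace Y] (hZ : IsNCCorson Z) {f : Z → Y} (hf : Continuous f) :
    IsWeaklyNCCorson (Set.range f) := by
  have hf' : Continuous (Set.rangeFactorization f) := continuous_rangeFactorization_iff.2 hf
  exact ⟨hZ.1.of_surjective hf' Set.rangeFactorization_surjective, Z, inferInstance,
    inferInstance, inferInstance, hZ, _, hf', Set.rangeFactorization_surjective⟩

end NCCorson

def HasDenseNCCorsonImage (K : Type u) [TopologicalSpace K] : Prop :=
  ∃ (Z : Type u) (_ : TopologicalSpace Z) (_ : T2Space Z) (_ : CompletelyRegularSpace Z),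
    IsNCCorson Z ∧ ∃ f : Z → K, Continuous f ∧ DenseRange f

lemma isWeaklyNCValdivia_iff {K : Type u} [TopologicalSpace K] :
    IsWeaklyNCValdivia K ↔ CompactSpace K ∧ HasDenseNCCorsonImage K := by
  constructor
  · rintro ⟨hK, D, hD, -, Z, _, _, _, hZ, f, hf, hfs⟩
    exact ⟨hK, Z, inferInstance, inferInstance, inferInstance, hZ, _,
      continuous_subtype_val.comp hf, hD.denseRange_val.comp hfs.denseRange continuous_subtype_val⟩
  · rintro ⟨hK, Z, _, _, _, hZ, f, hf, hfd⟩
    exact ⟨hK, _, hfd, hZ.isWeaklyNCCorson_range hf⟩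

lemma hasDenseNCCorsonImage_of_isEmpty (K : Type u) [TopologicalSpace K] [IsEmpty K] :
    HasDenseNCCorsonImage K :=
  ⟨PEmpty, inferInstance, inferInstance, inferInstance,
    hasFullRetractionalSkeleton_of_compact_metrizable.isNCCorson, PEmpty.elim,
    continuous_of_discreteTopology, Function.Surjective.denseRange isEmptyElim⟩

section SigmaProduct

variable {A : Type u} {X : A → Type u}

def sigmaProduct (p : ∀ α, X α) : Set (∀ α, X α) :=
  {x | {α | x α ≠ p α}.Countable}

lemma dense_sigmaProduct [∀ α, TopologicalSpace (X α)] (p : ∀ α, X α) :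
    Dense (sigmaProduct p) := by
  classical
  refine dense_iff_inter_open.2 fun U hU ⟨y, hy⟩ => ?_
  obtain ⟨J, u, hu, hJU⟩ := isOpen_pi_iff.1 hU y hy
  refine ⟨J.piecewise y p, hJU fun α hα => ?_, J.countable_toSet.mono fun α hα => ?_⟩
  · rw [Finset.piecewise_eq_of_mem _ _ _ hα]
    exact (hu α hα).2
  · by_contra h
    exact hα (Finset.piecewise_eq_of_notMem _ _ _ h)

variable {Γ : A → Type u}

variable (r : ∀ α, Γ α → X α → X α) (p : ∀ α, X α) in
/-- Asking every coordinate index to fix `p` keeps the retractions compatible when a coordinate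
becomes active. -/
abbrev SigmaIndex : Type u :=
  {C : Set A // C.Countable} × ∀ α, {s : Γ α // r α s (p α) = p α}

variable {r : ∀ α, Γ α → X α → X α} {p : ∀ α, X α}

open Classical in
noncomputable def sigmaRetraction (g : SigmaIndex r p) (x : sigmaProduct p) : sigmaProduct p :=
  ⟨g.1.1.piecewise (fun α => r α (g.2 α) (x.1 α)) p,
    g.1.2.mono fun _ hα => by_contra fun h => hα (Set.piecewise_eq_of_notMem _ _ _ h)⟩

open Classical in
lemma sigmaRetraction_apply_of_mem {g : SigmaIndex r p} (x : sigmaProduct p) {α : A}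
    (hα : α ∈ g.1.1) : (sigmaRetraction g x).1 α = r α (g.2 α) (x.1 α) :=
  Set.piecewise_eq_of_mem (g.1.1 : Set A) (fun α => r α (g.2 α) (x.1 α)) p hα

open Classical in
lemma sigmaRetraction_apply_of_notMem {g : SigmaIndex r p} (x : sigmaProduct p) {α : A}
    (hα : α ∉ g.1.1) : (sigmaRetraction g x).1 α = p α :=
  Set.piecewise_eq_of_notMem (g.1.1 : Set A) (fun α => r α (g.2 α) (x.1 α)) p hα

variable [∀ α, TopologicalSpace (X α)] [∀ α, PartialOrder (Γ α)]

lemma sigmaRetraction_comp_of_le (hr : ∀ α, IsRetractionalSkeleton (r α))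
    {g g' : SigmaIndex r p} (h : g ≤ g') :
    sigmaRetraction g' ∘ sigmaRetraction g = sigmaRetraction g ∧
      sigmaRetraction g ∘ sigmaRetraction g' = sigmaRetraction g := by
  obtain ⟨hC, hs⟩ := h
  refine ⟨funext fun x => Subtype.ext <| funext fun α => ?_,
    funext fun x => Subtype.ext <| funext fun α => ?_⟩ <;> rw [Function.comp_apply]
  · by_cases hα : α ∈ g.1.1
    · rw [sigmaRetraction_apply_of_mem _ (hC hα), sigmaRetraction_apply_of_mem _ hα]
      exact (hr α).apply_apply_of_le (hs α) _
    · rw [sigmaRetraction_apply_of_notMem _ hα]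
      by_cases hα' : α ∈ g'.1.1
      · rw [sigmaRetraction_apply_of_mem _ hα', sigmaRetraction_apply_of_notMem _ hα]
        exact (g'.2 α).2
      · exact sigmaRetraction_apply_of_notMem _ hα'
  · by_cases hα : α ∈ g.1.1
    · rw [sigmaRetraction_apply_of_mem _ hα, sigmaRetraction_apply_of_mem _ (hC hα),
        sigmaRetraction_apply_of_mem _ hα]
      exact congrFun ((hr α).comp_eq_of_le _ _ (hs α)).2 _
    · rw [sigmaRetraction_apply_of_notMem _ hα, sigmaRetraction_apply_of_notMem _ hα]

lemma continuous_sigmaRetraction (hr : ∀ α, IsRetractionalSkeleton (r α)) (g : SigmaIndex r p) :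
    Continuous (sigmaRetraction g) := by
  refine continuous_induced_rng.2 (continuous_pi fun α => ?_)
  by_cases hα : α ∈ g.1.1
  · simp only [Function.comp_apply, sigmaRetraction_apply_of_mem _ hα]
    exact ((hr α).continuous _).comp ((continuous_apply α).comp continuous_subtype_val)
  · simp only [Function.comp_apply, sigmaRetraction_apply_of_notMem _ hα]
    exact continuous_const

open Classical in
lemma image_val_range_sigmaRetraction (hr : ∀ α, IsRetractionalSkeleton (r α))
    (g : SigmaIndex r p) :
    Subtype.val '' Set.range (sigmaRetraction g) =
      Set.univ.pi (g.1.1.piecewise (fun α => Set.range (r α (g.2 α))) fun α => {p α}) := by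
  ext y
  constructor
  · rintro ⟨_, ⟨x, rfl⟩, rfl⟩ α -
    by_cases hα : α ∈ g.1.1
    · rw [Set.piecewise_eq_of_mem _ _ _ hα, sigmaRetraction_apply_of_mem _ hα]
      exact Set.mem_range_self _
    · rw [Set.piecewise_eq_of_notMem _ _ _ hα, sigmaRetraction_apply_of_notMem _ hα]
      exact Set.mem_singleton _
  · intro hy
    have hyα (α) (hα : α ∉ g.1.1) : y α = p α := by
      simpa only [Set.piecewise_eq_of_notMem _ _ _ hα, Set.mem_singleton_iff] using hy α trivial
    have hy_mem : y ∈ sigmaProduct p := g.1.2.mono fun α hne => by_contra fun hα => hne (hyα α hα)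
    refine ⟨⟨y, hy_mem⟩, ⟨⟨y, hy_mem⟩, Subtype.ext <| funext fun α => ?_⟩, rfl⟩
    by_cases hα : α ∈ g.1.1
    · have hy' := hy α trivial
      rw [Set.piecewise_eq_of_mem _ _ _ hα] at hy'
      rw [sigmaRetraction_apply_of_mem _ hα]
      exact (hr α).apply_eq_self_of_mem_range le_rfl hy'
    · rw [sigmaRetraction_apply_of_notMem _ hα]
      exact (hyα α hα).symm

lemma isCompact_range_sigmaRetraction (hr : ∀ α, IsRetractionalSkeleton (r α))
    (g : SigmaIndex r p) : IsCompact (Set.range (sigmaRetraction g)) := by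
  classical
  rw [Subtype.isCompact_iff, image_val_range_sigmaRetraction hr]
  refine isCompact_univ_pi fun α => ?_
  by_cases hα : α ∈ g.1.1
  · rw [Set.piecewise_eq_of_mem _ _ _ hα]
    exact (hr α).compact_range _
  · rw [Set.piecewise_eq_of_notMem _ _ _ hα]
    exact isCompact_singleton

lemma metrizableSpace_range_sigmaRetraction [∀ α, T2Space (X α)]
    (hr : ∀ α, IsRetractionalSkeleton (r α)) (g : SigmaIndex r p) :
    TopologicalSpace.MetrizableSpace (Set.range (sigmaRetraction g)) := by
  have : CompactSpace (Set.range (sigmaRetraction g)) :=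
    isCompact_iff_compactSpace.1 (isCompact_range_sigmaRetraction hr g)
  have : Countable g.1.1 := g.1.2.to_subtype
  have (β : g.1.1) : CompactSpace (Set.range (r β (g.2 β))) :=
    isCompact_iff_compactSpace.1 ((hr β).compact_range _)
  have (β : g.1.1) := (hr β).metrizable_range (g.2 β)
  have hmem (x : Set.range (sigmaRetraction g)) (β : g.1.1) :
      x.1.1 β ∈ Set.range (r β (g.2 β)) := by
    obtain ⟨_, x, rfl⟩ := x
    rw [sigmaRetraction_apply_of_mem _ β.2]
    exact Set.mem_range_self _
  refine metrizableSpace_of_injective_pi (Y := fun β : g.1.1 => Set.range (r β (g.2 β)))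
    (f := fun x β => ⟨x.1.1 β, hmem x β⟩)
    (continuous_pi fun β => Continuous.subtype_mk ((continuous_apply β.1).comp
      (continuous_subtype_val.comp continuous_subtype_val)) _) ?_
  rintro ⟨_, x, rfl⟩ ⟨_, y, rfl⟩ hxy
  refine Subtype.ext <| Subtype.ext <| funext fun α => ?_
  by_cases hα : α ∈ g.1.1
  · exact congrArg Subtype.val (congrFun hxy ⟨α, hα⟩)
  · exact (sigmaRetraction_apply_of_notMem x hα).trans (sigmaRetraction_apply_of_notMem y hα).symm

lemma exists_isLUB_sigmaRetraction (hr : ∀ α, IsRetractionalSkeleton (r α))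
    (u : ℕ → SigmaIndex r p) (hu : Monotone u) :
    ∃ t, IsLUB (Set.range u) t ∧ ∀ x,
      Tendsto (fun n => sigmaRetraction (u n) x) atTop (𝓝 (sigmaRetraction t x)) := by
  choose s hs_lub hs_lim using fun α =>
    (hr α).seq_sup (fun n => ((u n).2 α).1) fun _ _ h => (hu h).2 α
  have hs_fix (α) : r α (s α) (p α) = p α :=
    (hr α).apply_eq_self_of_le ((hs_lub α).1 (Set.mem_range_self 0)) ((u 0).2 α).2
  let t : SigmaIndex r p :=
    (⟨⋃ n, (u n).1.1, Set.countable_iUnion fun n => (u n).1.2⟩, fun α => ⟨s α, hs_fix α⟩)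
  refine ⟨t, ⟨?_, fun b hb => ?_⟩, fun x => ?_⟩
  · rintro _ ⟨n, rfl⟩
    exact ⟨Set.subset_iUnion (fun n => (u n).1.1) n, fun α => (hs_lub α).1 (Set.mem_range_self n)⟩
  · refine ⟨Set.iUnion_subset fun n => (hb (Set.mem_range_self n)).1, fun α => (hs_lub α).2 ?_⟩
    rintro _ ⟨n, rfl⟩
    exact (hb (Set.mem_range_self n)).2 α
  · rw [tendsto_subtype_rng, tendsto_pi_nhds]
    intro α
    by_cases hα : α ∈ t.1.1
    · obtain ⟨N, hN⟩ := Set.mem_iUnion.1 hα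
      rw [sigmaRetraction_apply_of_mem _ hα]
      refine (hs_lim α (x.1 α)).congr' ?_
      filter_upwards [eventually_ge_atTop N] with n hn
      rw [sigmaRetraction_apply_of_mem _ ((hu hn).1 hN)]
    · rw [sigmaRetraction_apply_of_notMem _ hα]
      exact tendsto_const_nhds.congr fun n =>
        (sigmaRetraction_apply_of_notMem _ fun h => hα (Set.mem_iUnion_of_mem n h)).symm

lemma sigmaIndex_directed (hr : ∀ α, IsRetractionalSkeleton (r α)) (g g' : SigmaIndex r p) :
    ∃ w, g ≤ w ∧ g' ≤ w := by
  choose s hgs hg's using fun α => (hr α).directed (g.2 α) (g'.2 α)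
  exact ⟨(⟨g.1.1 ∪ g'.1.1, g.1.2.union g'.1.2⟩,
    fun α => ⟨s α, (hr α).apply_eq_self_of_le (hgs α) (g.2 α).2⟩),
    ⟨Set.subset_union_left, hgs⟩, ⟨Set.subset_union_right, hg's⟩⟩

lemma exists_sigmaIndex_ge (hr : ∀ α, IsRetractionalSkeleton (r α))
    (hp : ∀ α, ∃ s, r α s (p α) = p α) (α : A) (a : Γ α) :
    ∃ g : SigmaIndex r p, α ∈ g.1.1 ∧ a ≤ (g.2 α).1 := by
  classical
  choose s hs using hp
  obtain ⟨w, haw, hsw⟩ := (hr α).directed a (s α)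
  refine ⟨(⟨{α}, Set.countable_singleton α⟩,
    Function.update (fun β => ⟨s β, hs β⟩) α ⟨w, (hr α).apply_eq_self_of_le hsw (hs α)⟩),
    rfl, ?_⟩
  simpa using haw

lemma tendsto_sigmaRetraction (hr : ∀ α, IsRetractionalSkeleton (r α))
    (hp : ∀ α, ∃ s, r α s (p α) = p α) (x : sigmaProduct p) :
    Tendsto (fun g : SigmaIndex r p => sigmaRetraction g x) atTop (𝓝 x) := by
  rw [tendsto_subtype_rng, tendsto_pi_nhds]
  intro α
  have hcoord : Tendsto (fun g : SigmaIndex r p => (g.2 α).1) atTop atTop :=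
    tendsto_atTop.2 fun a => by
      obtain ⟨g₀, -, hg₀⟩ := exists_sigmaIndex_ge hr hp α a
      exact (eventually_ge_atTop g₀).mono fun g hg => hg₀.trans (hg.2 α)
  obtain ⟨g₀, hα, -⟩ := exists_sigmaIndex_ge hr hp α (hr α).nonempty.some
  refine (((hr α).tendsto_id (x.1 α)).comp hcoord).congr' ?_
  filter_upwards [eventually_ge_atTop g₀] with g hg
  exact (sigmaRetraction_apply_of_mem x (hg.1 hα)).symm

lemma isRetractionalSkeleton_sigmaRetraction [∀ α, T2Space (X α)]
    (hr : ∀ α, IsRetractionalSkeleton (r α)) (hp : ∀ α, ∃ s, r α s (p α) = p α) :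
    IsRetractionalSkeleton (sigmaRetraction (r := r) (p := p)) where
  nonempty := by
    choose s hs using hp
    exact ⟨(⟨∅, Set.countable_empty⟩, fun α => ⟨s α, hs α⟩)⟩
  directed := sigmaIndex_directed hr
  continuous := continuous_sigmaRetraction hr
  retraction _ := (sigmaRetraction_comp_of_le hr le_rfl).1
  compact_range := isCompact_range_sigmaRetraction hr
  metrizable_range := metrizableSpace_range_sigmaRetraction hr
  comp_eq_of_le _ _ := sigmaRetraction_comp_of_le hr
  seq_sup := exists_isLUB_sigmaRetraction hr
  tendsto_id := tendsto_sigmaRetraction hr hp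

lemma exists_mem_range_sigmaRetraction (hr : ∀ α, IsRetractionalSkeleton (r α))
    (hfull : ∀ α (y : X α), ∃ s, y ∈ Set.range (r α s)) (x : sigmaProduct p) :
    ∃ g : SigmaIndex r p, x ∈ Set.range (sigmaRetraction g) := by
  choose s hs using fun α => hfull α (x.1 α)
  choose σ hσ using fun α => hfull α (p α)
  choose w hsw hσw using fun α => (hr α).directed (s α) (σ α)
  refine ⟨(⟨{α | x.1 α ≠ p α}, x.2⟩,
    fun α => ⟨w α, (hr α).apply_eq_self_of_mem_range (hσw α) (hσ α)⟩), x,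
    Subtype.ext <| funext fun α => ?_⟩
  by_cases hα : x.1 α = p α
  · exact (sigmaRetraction_apply_of_notMem x (not_not.2 hα)).trans hα.symm
  · exact (sigmaRetraction_apply_of_mem x hα).trans
      ((hr α).apply_eq_self_of_mem_range (hsw α) (hs α))

theorem hasFullRetractionalSkeleton_sigmaProduct [∀ α, T2Space (X α)]
    (h : ∀ α, HasFullRetractionalSkeleton (X α)) (p : ∀ α, X α) :
    HasFullRetractionalSkeleton (sigmaProduct p) := by
  choose Γ _ r hr hfull using h
  have hp (α) : ∃ s, r α s (p α) = p α :=
    (hfull α (p α)).imp fun _ => (hr α).apply_eq_self_of_mem_range le_rfl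
  exact ⟨SigmaIndex r p, inferInstance, sigmaRetraction,
    isRetractionalSkeleton_sigmaRetraction hr hp, exists_mem_range_sigmaRetraction hr hfull⟩

end SigmaProduct

theorem HasDenseNCCorsonImage.pi {A : Type u} {K : A → Type u} [∀ α, TopologicalSpace (K α)]
    (h : ∀ α, HasDenseNCCorsonImage (K α)) : HasDenseNCCorsonImage (∀ α, K α) := by
  choose Z _ _ _ hZ f hf hfd using h
  rcases isEmpty_or_nonempty (∀ α, Z α) with hZe | hZne
  · have : IsEmpty (∀ α, K α) :=
      not_nonempty_iff.1 ((DenseRange.piMap hfd).nonempty_iff.not.1 (not_nonempty_iff.2 hZe))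
    exact hasDenseNCCorsonImage_of_isEmpty _
  · obtain ⟨p⟩ := hZne
    exact ⟨sigmaProduct p, inferInstance, inferInstance, inferInstance,
      (hasFullRetractionalSkeleton_sigmaProduct (fun α => (hZ α).2) p).isNCCorson,
      Pi.map f ∘ Subtype.val, (Continuous.piMap hf).comp continuous_subtype_val,
      (DenseRange.piMap hfd).comp (dense_sigmaProduct p).denseRange_val (Continuous.piMap hf)⟩

theorem prod_of_weaklyNCValdivia_general
    {A : Type u} {K : A → Type u} [∀ α, TopologicalSpace (K α)]
    (h : ∀ α, IsWeaklyNCValdivia (K α)) :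
    IsWeaklyNCValdivia (∀ α, K α) := by
  have hK := fun α => isWeaklyNCValdivia_iff.1 (h α)
  have : ∀ α, CompactSpace (K α) := fun α => (hK α).1
  exact isWeaklyNCValdivia_iff.2 ⟨Pi.compactSpace, .pi fun α => (hK α).2⟩

/-- An arbitrary product of weakly non-commutative Valdivia compact spaces
is a weakly non-commutative Valdivia compact space. -/
theorem prod_of_weaklyNCValdivia
    {A : Type u} {K : A → Type u} [∀ α, TopologicalSpace (K α)] [∀ α, T2Space (K α)]
    (h : ∀ α, IsWeaklyNCValdivia (K α)) :
    IsWeaklyNCValdivia (∀ α, K α) :=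
  prod_of_weaklyNCValdivia_general h
end
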